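/- arXiv:2406.11998 — 2 statements merged into one kernel-verified Lean document; each statement's English description precedes it below -/
import Mathlib

section
/- Let G = (V, E, w) be a weighted digraph and f, g : G → G digraph maps that are one-step homotopic, and let η ≥ max{dis(f), dis(g), cod(f, g)}. Then for every δ ≥ 0, the vertex maps f and g define digraph maps f^δ, g^δ : G^δ → G^{δ+η} on the edge sublevel digraphs, and f^δ and g^δ are one-step homotopic. -/
/-!
STATEMENT 14: Let G = (V, E, w) be a weighted digraph and f, g : G → G digraph maps that
are one-step homotopic, and let η ≥ max{dis(f), dis(g), cod(f, g)}.  Then for every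
δ ≥ 0 the vertex maps f and g define digraph maps f^δ, g^δ : G^δ → G^{δ+η} on the edge
sublevel digraphs, and f^δ and g^δ are one-step homotopic.
-/

namespace PH

/-- A weighted digraph: an edge relation without self-loops together with positive
edge weights. -/
structure WDigraph (V : Type) where
  edge : V → V → Prop
  loopless : ∀ v : V, ¬ edge v v
  w : V → V → ℝ
  w_pos : ∀ i j : V, edge i j → 0 < w i j

/-- The edge sublevel digraph G^δ: the edges of weight ≤ δ. -/
def sublevel {V : Type} (G : WDigraph V) (δ : ℝ) : WDigraph V where
  edge i j := G.edge i j ∧ G.w i j ≤ δ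
  loopless v h := G.loopless v h.1
  w := G.w
  w_pos i j h := G.w_pos i j h.1

/-- A digraph map: i → j implies f(i) = f(j) or f(i) → f(j). -/
def IsDGMap {V W : Type} (G : WDigraph V) (H : WDigraph W) (f : V → W) : Prop :=
  ∀ i j : V, G.edge i j → f i = f j ∨ H.edge (f i) (f j)

/-- The distortion dis(φ) of a digraph map between weighted digraphs
(the max over the empty set being 0). -/
noncomputable def dis {V W : Type} (G : WDigraph V) (H : WDigraph W) (φ : V → W) : ℝ :=
  sSup (insert 0 {d : ℝ | ∃ x x' : V, G.edge x x' ∧ H.edge (φ x) (φ x') ∧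
    d = |H.w (φ x) (φ x') - G.w x x'|})

/-- cod(φ, ψ): the maximum weight of an edge of the target of the form φ(x) → ψ(x) or
ψ(x) → φ(x) (0 if there is none). -/
noncomputable def cod {V W : Type} (H : WDigraph W) (φ ψ : V → W) : ℝ :=
  sSup (insert 0 ({d : ℝ | ∃ x : V, H.edge (φ x) (ψ x) ∧ d = H.w (φ x) (ψ x)} ∪
                  {d : ℝ | ∃ x : V, H.edge (ψ x) (φ x) ∧ d = H.w (ψ x) (φ x)}))

/-- One-step homotopy of maps into a weighted digraph H: f(x) ⇒ g(x) for all x, or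
g(x) ⇒ f(x) for all x. -/
def StepHomotopic {V W : Type} (H : WDigraph W) (f g : V → W) : Prop :=
  (∀ x : V, f x = g x ∨ H.edge (f x) (g x)) ∨
  (∀ x : V, g x = f x ∨ H.edge (g x) (f x))

/-- The elementary paths of the path complex generated by (the underlying digraph of)
a weighted digraph. -/
def pathsOfW {V : Type} (G : WDigraph V) : Set (List V) :=
  {l | l ≠ [] ∧ l.Chain' G.edge}

end PH


section Aux
open PH

lemma dis_bdd {V W : Type} [Fintype V] (G : WDigraph V) (H : WDigraph W) (φ : V → W) :
    BddAbove (insert 0 {d : ℝ | ∃ x x' : V, G.edge x x' ∧ H.edge (φ x) (φ x') ∧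
      d = |H.w (φ x) (φ x') - G.w x x'|}) := by
  apply Set.Finite.bddAbove
  apply Set.Finite.insert
  have : {d : ℝ | ∃ x x' : V, G.edge x x' ∧ H.edge (φ x) (φ x') ∧
      d = |H.w (φ x) (φ x') - G.w x x'|} ⊆
      (fun p : V × V => |H.w (φ p.1) (φ p.2) - G.w p.1 p.2|) '' Set.univ := by
    rintro d ⟨x, x', _, _, rfl⟩
    exact ⟨(x, x'), Set.mem_univ _, rfl⟩
  exact Set.Finite.subset (Set.Finite.image _ Set.finite_univ) this

lemma cod_bdd {V W : Type} [Fintype V] (H : WDigraph W) (φ ψ : V → W) :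
    BddAbove (insert 0 ({d : ℝ | ∃ x : V, H.edge (φ x) (ψ x) ∧ d = H.w (φ x) (ψ x)} ∪
      {d : ℝ | ∃ x : V, H.edge (ψ x) (φ x) ∧ d = H.w (ψ x) (φ x)})) := by
  apply Set.Finite.bddAbove
  apply Set.Finite.insert
  apply Set.Finite.union
  · have : {d : ℝ | ∃ x : V, H.edge (φ x) (ψ x) ∧ d = H.w (φ x) (ψ x)} ⊆
        (fun x : V => H.w (φ x) (ψ x)) '' Set.univ := by
      rintro d ⟨x, _, rfl⟩; exact ⟨x, Set.mem_univ _, rfl⟩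
    exact Set.Finite.subset (Set.Finite.image _ Set.finite_univ) this
  · have : {d : ℝ | ∃ x : V, H.edge (ψ x) (φ x) ∧ d = H.w (ψ x) (φ x)} ⊆
        (fun x : V => H.w (ψ x) (φ x)) '' Set.univ := by
      rintro d ⟨x, _, rfl⟩; exact ⟨x, Set.mem_univ _, rfl⟩
    exact Set.Finite.subset (Set.Finite.image _ Set.finite_univ) this

lemma le_dis {V W : Type} [Fintype V] (G : WDigraph V) (H : WDigraph W) (φ : V → W)
    {x x' : V} (h1 : G.edge x x') (h2 : H.edge (φ x) (φ x')) :
    |H.w (φ x) (φ x') - G.w x x'| ≤ dis G H φ :=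
  le_csSup (dis_bdd G H φ) (Set.mem_insert_of_mem _ ⟨x, x', h1, h2, rfl⟩)

lemma dis_nonneg {V W : Type} [Fintype V] (G : WDigraph V) (H : WDigraph W) (φ : V → W) :
    0 ≤ dis G H φ :=
  le_csSup (dis_bdd G H φ) (Set.mem_insert _ _)

lemma le_cod_left {V W : Type} [Fintype V] (H : WDigraph W) (φ ψ : V → W)
    {x : V} (h : H.edge (φ x) (ψ x)) : H.w (φ x) (ψ x) ≤ cod H φ ψ :=
  le_csSup (cod_bdd H φ ψ) (Set.mem_insert_of_mem _ (Or.inl ⟨x, h, rfl⟩))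

lemma le_cod_right {V W : Type} [Fintype V] (H : WDigraph W) (φ ψ : V → W)
    {x : V} (h : H.edge (ψ x) (φ x)) : H.w (ψ x) (φ x) ≤ cod H φ ψ :=
  le_csSup (cod_bdd H φ ψ) (Set.mem_insert_of_mem _ (Or.inr ⟨x, h, rfl⟩))

lemma map_sublevel {V : Type} [Fintype V] (G : WDigraph V) (φ : V → V)
    (hφ : IsDGMap G G φ) {η : ℝ} (hη : dis G G φ ≤ η) (δ : ℝ) (hδ : 0 ≤ δ) :
    IsDGMap (sublevel G δ) (sublevel G (δ + η)) φ := by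
  intro i j hij
  rcases hφ i j hij.1 with h | h
  · exact Or.inl h
  · refine Or.inr ⟨h, ?_⟩
    have := le_dis G G φ hij.1 h
    have := abs_le.mp (this.trans hη)
    linarith [hij.2]

end Aux

theorem statement14 (V : Type) [Fintype V] (G : PH.WDigraph V) (f g : V → V)
    (hf : PH.IsDGMap G G f) (hg : PH.IsDGMap G G g)
    (hfg : PH.StepHomotopic G f g)
    (η : ℝ) (hη : max (max (PH.dis G G f) (PH.dis G G g)) (PH.cod G f g) ≤ η) :
    ∀ δ : ℝ, 0 ≤ δ →
      PH.IsDGMap (PH.sublevel G δ) (PH.sublevel G (δ + η)) f ∧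
      PH.IsDGMap (PH.sublevel G δ) (PH.sublevel G (δ + η)) g ∧
      PH.StepHomotopic (PH.sublevel G (δ + η)) f g := by
  intro δ hδ
  have hdf : PH.dis G G f ≤ η := le_trans (le_trans (le_max_left _ _) (le_max_left _ _)) hη
  have hdg : PH.dis G G g ≤ η := le_trans (le_trans (le_max_right _ _) (le_max_left _ _)) hη
  have hc : PH.cod G f g ≤ η := le_trans (le_max_right _ _) hη
  refine ⟨map_sublevel G f hf hdf δ hδ, map_sublevel G g hg hdg δ hδ, ?_⟩
  rcases hfg with h | h
  · left
    intro x
    rcases h x with h' | h'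
    · exact Or.inl h'
    · refine Or.inr ⟨h', ?_⟩
      have := le_cod_left G f g h'
      linarith
  · right
    intro x
    rcases h x with h' | h'
    · exact Or.inl h'
    · refine Or.inr ⟨h', ?_⟩
      have := le_cod_right G f g h'
      linarith
end

section
/- Let G = (V_G, E_G, w_G) and H = (V_H, E_H, w_H) be weighted digraphs, and suppose there are digraph maps φ : G → H and ψ : H → G with one-step homotopy chains ψ∘φ = f_0 ≃₁ f_1 ≃₁ … ≃₁ f_m = id_G and φ∘ψ = g_0 ≃₁ g_1 ≃₁ … ≃₁ g_m = id_H. Set η = max{ dis(φ), dis(ψ), ½·max_{k=1,…,m−1} dis(f_k), ½·max_{k=1,…,m−1} dis(g_k), ½·max_{k=1,…,m} cod(f_{k−1}, f_k), ½·max_{k=1,…,m} cod(g_{k−1}, g_k) }. Then for every p ∈ ℕ and every field K, the persistence modules δ ↦ H_p(G^δ) and δ ↦ H_p(H^δ) (indexed by δ ∈ [0, ∞), with structure maps induced by the inclusions of edge sublevel digraphs) are η-interleaved, via the maps induced on path homology by φ and ψ. -/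
/-!
STATEMENT 15: Let G, H be weighted digraphs with digraph maps φ : G → H, ψ : H → G and
one-step homotopy chains ψ∘φ = f₀ ≃₁ … ≃₁ f_m = id_G and φ∘ψ = g₀ ≃₁ … ≃₁ g_m = id_H.
With η = max{dis(φ), dis(ψ), ½·max_{1≤k≤m−1} dis(f_k), ½·max_{1≤k≤m−1} dis(g_k),
½·max_{1≤k≤m} cod(f_{k−1}, f_k), ½·max_{1≤k≤m} cod(g_{k−1}, g_k)}, for every p ∈ ℕ and
every field K the persistence modules δ ↦ H_p(G^δ) and δ ↦ H_p(H^δ) (δ ∈ [0,∞),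
structure maps induced by the inclusions of edge sublevel digraphs) are η-interleaved via
the maps induced on path homology by φ and ψ.

The interleaving is expressed at the level of cycles and boundaries: the chain maps
induced by φ and ψ carry p-cycles/p-boundaries of G^δ (resp. H^δ) to those of H^{δ+η}
(resp. G^{δ+η}); the structure maps are the submodule inclusions (with which these chain
maps commute automatically, the induced chain map being independent of δ); and the
composites agree on homology with the structure maps δ ≤ δ+2η, i.e. ψ_*(φ_* z) − z and
φ_*(ψ_* z) − z are boundaries at level δ+2η.
-/

open scoped Classical

namespace PH

/-- An elementary path (a list of vertices) is regular if no two consecutive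
vertices coincide. -/
def Reg {V : Type} (l : List V) : Prop := l.Chain' (· ≠ ·)

/-- The regular boundary operator ∂ on the span of regular paths (all degrees at once,
with the convention that ∂ vanishes on 0-paths): on a basis path `p` of length ≥ 2 it is
the alternating sum of the vertex deletions, with non-regular terms replaced by 0. -/
noncomputable def dReg (K : Type) [Field K] (V : Type) :
    (List V →₀ K) →ₗ[K] (List V →₀ K) :=
  Finsupp.lsum K fun p => LinearMap.toSpanSingleton K (List V →₀ K)
    (if 2 ≤ p.length then
      ∑ q : Fin p.length, ((-1 : K) ^ (q : ℕ)) •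
        (if Reg (p.eraseIdx (q : ℕ)) then Finsupp.single (p.eraseIdx (q : ℕ)) (1 : K) else 0)
    else 0)

/-- The map induced on regular chains by a vertex map f:
`e_{i₀…iₙ} ↦ e_{f(i₀)…f(iₙ)}` if the image path is regular, and 0 otherwise. -/
noncomputable def find (K : Type) [Field K] {V W : Type} (f : V → W) :
    (List V →₀ K) →ₗ[K] (List W →₀ K) :=
  Finsupp.lsum K fun p => LinearMap.toSpanSingleton K (List W →₀ K)
    (if Reg (p.map f) then Finsupp.single (p.map f) (1 : K) else 0)

/-- `A_n(P)`: the span of the regular allowed n-paths (lists of n+1 vertices in P). -/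
def Asub (K : Type) [Field K] {V : Type} (P : Set (List V)) (n : ℕ) :
    Submodule K (List V →₀ K) :=
  Finsupp.supported K K {l | l ∈ P ∧ l.length = n + 1 ∧ Reg l}

/-- `Ω_n(P)`: the ∂-invariant allowed regular n-chains. -/
noncomputable def OmegaSub (K : Type) [Field K] {V : Type} (P : Set (List V)) (n : ℕ) :
    Submodule K (List V →₀ K) :=
  Asub K P n ⊓ Submodule.comap (dReg K V) (Asub K P (n - 1))

/-- The n-cycles of Ω_*(P). -/
noncomputable def Zsub (K : Type) [Field K] {V : Type} (P : Set (List V)) (n : ℕ) :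
    Submodule K (List V →₀ K) :=
  OmegaSub K P n ⊓ LinearMap.ker (dReg K V)

/-- The n-boundaries ∂Ω_{n+1}(P). -/
noncomputable def Bsub (K : Type) [Field K] {V : Type} (P : Set (List V)) (n : ℕ) :
    Submodule K (List V →₀ K) :=
  Submodule.map (dReg K V) (OmegaSub K P (n + 1))

/-- Path homology `H_n(P)`, realized as the image of the n-cycles in the quotient of the
ambient space by the n-boundaries (so `H_n(P) ≅ Z_n/(Z_n ∩ B_n) = Z_n/B_n`). -/
noncomputable def Hsm (K : Type) [Field K] {V : Type} (P : Set (List V)) (n : ℕ) :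
    Submodule K ((List V →₀ K) ⧸ Bsub K P n) :=
  Submodule.map (Bsub K P n).mkQ (Zsub K P n)

/-- A path complex on V: a set of non-empty elementary paths (lists) closed under
removing the last (`dropLast`) or the first (`tail`) vertex. -/
structure PathComplex (V : Type) where
  carrier : Set (List V)
  not_nil : ∀ p ∈ carrier, p ≠ []
  dropLast_mem : ∀ p ∈ carrier, 2 ≤ p.length → p.dropLast ∈ carrier
  tail_mem : ∀ p ∈ carrier, 2 ≤ p.length → p.tail ∈ carrier

end PH

/-!
A digraph map `f` acts on regular chains by `find K f`, a chain map, and two maps with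
`u(x) ⇒ v(x)` for all `x` are chain homotopic through the regularized prism operator
`e_{p₀…pₙ} ↦ Σₖ (-1)ᵏ e_{u(p₀)…u(pₖ) v(pₖ)…v(pₙ)}`, whose regular terms over allowed paths are
again allowed. An edge of `G^δ` is carried by `φ` to an edge of `H^{δ+dis φ}`, so `φ` and `ψ`
shift sublevels by at most `η`. The bounds on `dis(f_k)` and `cod(f_{k-1}, f_k)` keep all the
maps `f_k` and the one-step homotopies between them inside `G^{δ+2η}`; telescoping the prisms
along `ψ ∘ φ = f₀ ≃₁ … ≃₁ f_m = id` shows that `ψ_* φ_* z - z` is a boundary in `G^{δ+2η}` for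
every cycle `z` of `G^δ`.
-/

namespace PH

section Operators

variable (K : Type) [Field K] {V W : Type}

noncomputable def regProj (V : Type) : (List V →₀ K) →ₗ[K] (List V →₀ K) :=
  Finsupp.lsum K fun p => LinearMap.toSpanSingleton K (List V →₀ K)
    (if Reg p then Finsupp.single p (1 : K) else 0)

/-- The boundary on all elementary paths, regular or not, in every degree (so
`dFull e_[a] = e_[]`); in degrees `≥ 1`, `dReg` is `regProj ∘ dFull`. -/
noncomputable def dFull (V : Type) : (List V →₀ K) →ₗ[K] (List V →₀ K) :=
  Finsupp.lsum K fun p => LinearMap.toSpanSingleton K (List V →₀ K)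
    (∑ q : Fin p.length, ((-1 : K) ^ (q : ℕ)) • Finsupp.single (p.eraseIdx q) (1 : K))

noncomputable def pathMap (f : V → W) : (List V →₀ K) →ₗ[K] (List W →₀ K) :=
  Finsupp.lmapDomain K K (List.map f)

noncomputable def cone (a : V) : (List V →₀ K) →ₗ[K] (List V →₀ K) :=
  Finsupp.lmapDomain K K (List.cons a)

/-- The `k`-th path of the prism over `p` between `f` and `g`:
`f(p₀) … f(p_k) g(p_k) … g(p_n)`. -/
def prismPath (f g : V → W) (p : List V) (k : ℕ) : List W :=
  (p.take (k + 1)).map f ++ (p.drop k).map g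

noncomputable def prismFull (f g : V → W) : (List V →₀ K) →ₗ[K] (List W →₀ K) :=
  Finsupp.lsum K fun p => LinearMap.toSpanSingleton K (List W →₀ K)
    (∑ k : Fin p.length, ((-1 : K) ^ (k : ℕ)) • Finsupp.single (prismPath f g p k) (1 : K))

noncomputable def prismReg (f g : V → W) : (List V →₀ K) →ₗ[K] (List W →₀ K) :=
  (regProj K W).comp (prismFull K f g)

variable {K}

lemma lhom_ext_single {N : Type} [AddCommGroup N] [Module K N]
    {φ ψ : (List V →₀ K) →ₗ[K] N}
    (h : ∀ p : List V, φ (Finsupp.single p 1) = ψ (Finsupp.single p 1)) : φ = ψ :=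
  Finsupp.lhom_ext' fun p => LinearMap.ext_ring (h p)

@[simp] lemma regProj_single (p : List V) :
    regProj K V (Finsupp.single p 1) = if Reg p then Finsupp.single p 1 else 0 := by
  simp [regProj]

@[simp] lemma dFull_single (p : List V) :
    dFull K V (Finsupp.single p 1) =
      ∑ q : Fin p.length, ((-1 : K) ^ (q : ℕ)) • Finsupp.single (p.eraseIdx q) 1 := by
  simp [dFull]

@[simp] lemma pathMap_single (f : V → W) (p : List V) :
    pathMap K f (Finsupp.single p 1) = Finsupp.single (p.map f) 1 := by
  simp [pathMap]

@[simp] lemma cone_single (a : V) (p : List V) :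
    cone K a (Finsupp.single p 1) = Finsupp.single (a :: p) 1 := by
  simp [cone]

@[simp] lemma prismFull_single (f g : V → W) (p : List V) :
    prismFull K f g (Finsupp.single p 1) =
      ∑ k : Fin p.length, ((-1 : K) ^ (k : ℕ)) • Finsupp.single (prismPath f g p k) 1 := by
  simp [prismFull]

lemma dReg_single (p : List V) :
    dReg K V (Finsupp.single p 1) =
      if 2 ≤ p.length then
        ∑ q : Fin p.length, ((-1 : K) ^ (q : ℕ)) •
          (if Reg (p.eraseIdx q) then Finsupp.single (p.eraseIdx q) 1 else 0)
      else 0 := by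
  simp [dReg]

lemma find_single (f : V → W) (p : List V) :
    find K f (Finsupp.single p 1) = if Reg (p.map f) then Finsupp.single (p.map f) 1 else 0 := by
  simp [find]

lemma find_eq_regProj_comp_pathMap (f : V → W) :
    find K f = (regProj K W).comp (pathMap K f) :=
  lhom_ext_single fun p => by simp [find_single]

lemma dReg_single_of_two_le {p : List V} (hp : 2 ≤ p.length) :
    dReg K V (Finsupp.single p 1) = regProj K V (dFull K V (Finsupp.single p 1)) := by
  rw [dReg_single, if_pos hp, dFull_single, map_sum]
  exact Finset.sum_congr rfl fun q _ => by rw [map_smul, regProj_single]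

lemma dReg_single_of_length_lt_two {p : List V} (hp : p.length < 2) :
    dReg K V (Finsupp.single p 1) = 0 := by
  simp [dReg_single, hp]

end Operators

section Regularity

variable {V W : Type}

lemma reg_iff_getElem {l : List V} : Reg l ↔ ∀ (i : ℕ) (h : i + 1 < l.length), l[i] ≠ l[i + 1] :=
  List.isChain_iff_getElem

lemma Reg.of_map (f : V → W) {l : List V} (h : Reg (l.map f)) : Reg l :=
  (List.isChain_map f).mp h |>.imp fun _ _ hne heq => hne (congrArg f heq)

lemma Reg.of_prismPath {f g : V → W} {p : List V} {k : ℕ} (h : Reg (prismPath f g p k)) :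
    Reg p := by
  have h₁ := reg_iff_getElem.mp (Reg.of_map f (List.IsChain.left_of_append h))
  have h₂ := reg_iff_getElem.mp (Reg.of_map g (List.IsChain.right_of_append h))
  refine reg_iff_getElem.mpr fun i hi => ?_
  rcases lt_or_ge i k with hik | hik
  · have := h₁ i (by simp; omega)
    rwa [List.getElem_take, List.getElem_take] at this
  · have := h₂ (i - k) (by simp; omega)
    rw [List.getElem_drop, List.getElem_drop] at this
    convert this using 2 <;> omega

lemma not_reg_eraseIdx {l : List V} {i q : ℕ} (hi : i + 1 < l.length) (heq : l[i] = l[i + 1])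
    (hq : q < l.length) (hqi : q ≠ i) (hqi' : q ≠ i + 1) : ¬ Reg (l.eraseIdx q) := by
  have hlen : (l.eraseIdx q).length = l.length - 1 := List.length_eraseIdx_of_lt hq
  intro h
  rcases lt_or_gt_of_ne hqi with hlt | hgt
  · refine reg_iff_getElem.mp h (i - 1) (by omega) ?_
    rw [List.getElem_eraseIdx_of_ge _ (by omega), List.getElem_eraseIdx_of_ge _ (by omega)]
    simpa [Nat.sub_add_cancel (by omega : 1 ≤ i)] using heq
  · refine reg_iff_getElem.mp h i (by omega) ?_
    rw [List.getElem_eraseIdx_of_lt _ (by omega), List.getElem_eraseIdx_of_lt _ (by omega)]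
    exact heq

lemma eraseIdx_eq_eraseIdx_succ {l : List V} {i : ℕ} (hi : i + 1 < l.length)
    (heq : l[i] = l[i + 1]) : l.eraseIdx i = l.eraseIdx (i + 1) := by
  apply List.ext_getElem (by simp [List.length_eraseIdx_of_lt, hi, Nat.lt_of_succ_lt hi])
  intro n h₁ h₂
  rw [List.getElem_eraseIdx, List.getElem_eraseIdx]
  rcases Nat.lt_trichotomy n i with h | rfl | h
  · rw [dif_pos h, dif_pos (by omega)]
  · rw [dif_neg (by omega), dif_pos (by omega)]
    exact heq.symm
  · rw [dif_neg (by omega), dif_neg (by omega)]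

variable {K : Type} [Field K]

/-- The non-regular paths span a subcomplex for `dFull`: if `l[i] = l[i+1]`, the faces
`l.eraseIdx i` and `l.eraseIdx (i+1)` coincide and cancel, and all other faces are
non-regular. -/
lemma regProj_dFull_single_of_not_reg {l : List V} (hl : ¬ Reg l) :
    regProj K V (dFull K V (Finsupp.single l 1)) = 0 := by
  obtain ⟨i, hi, heq⟩ := List.exists_not_getElem_of_not_isChain hl
  rw [not_not] at heq
  rw [dFull_single, map_sum]
  have hne : (⟨i, by omega⟩ : Fin l.length) ≠ ⟨i + 1, hi⟩ := by simp [Fin.ext_iff]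
  rw [Finset.sum_eq_add _ _ hne (fun c _ hc => ?_) (by simp) (by simp)]
  · simp only [map_smul, regProj_single, eraseIdx_eq_eraseIdx_succ hi heq, pow_succ]
    split_ifs <;> module
  · have h₁ : (c : ℕ) ≠ i := fun h => hc.1 (Fin.ext h)
    have h₂ : (c : ℕ) ≠ i + 1 := fun h => hc.2 (Fin.ext h)
    rw [map_smul, regProj_single, if_neg (not_reg_eraseIdx hi heq c.isLt h₁ h₂), smul_zero]

end Regularity

section Prism

variable {K : Type} [Field K] {V W : Type}

@[simp] lemma prismPath_cons_zero (f g : V → W) (x : V) (t : List V) :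
    prismPath f g (x :: t) 0 = f x :: g x :: t.map g := rfl

@[simp] lemma prismPath_cons_succ (f g : V → W) (x : V) (t : List V) (k : ℕ) :
    prismPath f g (x :: t) (k + 1) = f x :: prismPath f g t k := rfl

lemma length_prismPath (f g : V → W) {p : List V} {k : ℕ} (hk : k < p.length) :
    (prismPath f g p k).length = p.length + 1 := by
  simp [prismPath]
  omega

lemma dFull_pathMap (f : V → W) (x : List V →₀ K) :
    dFull K W (pathMap K f x) = pathMap K f (dFull K V x) := by
  suffices h : (dFull K W).comp (pathMap K f) = (pathMap K f).comp (dFull K V) from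
    LinearMap.congr_fun h x
  refine lhom_ext_single fun p => ?_
  simp only [LinearMap.comp_apply, pathMap_single, dFull_single, map_sum, map_smul,
    List.eraseIdx_map]
  exact Fintype.sum_equiv (finCongr (List.length_map f)) _ _ fun _ => rfl

lemma pathMap_cone (f : V → W) (a : V) (x : List V →₀ K) :
    pathMap K f (cone K a x) = cone K (f a) (pathMap K f x) := by
  suffices h : (pathMap K f).comp (cone K a) = (cone K (f a)).comp (pathMap K f) from
    LinearMap.congr_fun h x
  exact lhom_ext_single fun p => by simp

lemma pathMap_pathMap {U : Type} (f : V → W) (g : W → U) (x : List V →₀ K) :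
    pathMap K g (pathMap K f x) = pathMap K (g ∘ f) x := by
  simp [pathMap, ← Finsupp.mapDomain_comp, List.map_comp_map]

lemma dFull_cone (a : V) (x : List V →₀ K) :
    dFull K V (cone K a x) = x - cone K a (dFull K V x) := by
  suffices h : (dFull K V).comp (cone K a) = LinearMap.id - (cone K a).comp (dFull K V) from
    LinearMap.congr_fun h x
  refine lhom_ext_single fun p => ?_
  simp only [LinearMap.comp_apply, LinearMap.sub_apply, LinearMap.id_apply, cone_single,
    dFull_single, List.length_cons, Fin.sum_univ_succ, map_sum, map_smul]
  simp [pow_succ, sub_eq_add_neg]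

lemma prismFull_cone (f g : V → W) (a : V) (x : List V →₀ K) :
    prismFull K f g (cone K a x) =
      cone K (f a) (pathMap K g (cone K a x)) - cone K (f a) (prismFull K f g x) := by
  suffices h : (prismFull K f g).comp (cone K a) =
      (cone K (f a)).comp ((pathMap K g).comp (cone K a)) -
        (cone K (f a)).comp (prismFull K f g) from LinearMap.congr_fun h x
  refine lhom_ext_single fun p => ?_
  simp only [LinearMap.comp_apply, LinearMap.sub_apply, cone_single, prismFull_single,
    pathMap_single, List.length_cons, Fin.sum_univ_succ, map_sum, map_smul]
  simp [pow_succ, sub_eq_add_neg]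

lemma prismFull_chainHomotopy (f g : V → W) :
    (dFull K W).comp (prismFull K f g) + (prismFull K f g).comp (dFull K V) =
      pathMap K g - pathMap K f := by
  refine lhom_ext_single fun p => ?_
  simp only [LinearMap.add_apply, LinearMap.comp_apply, LinearMap.sub_apply]
  induction p with
  | nil => simp
  | cons a t ih =>
    -- over `a :: t` the prism is a cone with apex `f a`, see `prismFull_cone`
    rw [← cone_single (K := K) a t]
    simp only [prismFull_cone, dFull_cone, dFull_pathMap, pathMap_cone, map_sub,
      eq_sub_of_add_eq ih]
    abel

end Prism

section Regularized

variable {K : Type} [Field K] {V W : Type}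

lemma find_regProj (f : V → W) (x : List V →₀ K) : find K f (regProj K V x) = find K f x := by
  suffices h : (find K f).comp (regProj K V) = find K f from LinearMap.congr_fun h x
  refine lhom_ext_single fun p => ?_
  by_cases hp : Reg p
  · simp [hp]
  · rw [LinearMap.comp_apply, regProj_single, if_neg hp, map_zero, find_single,
      if_neg (mt (Reg.of_map f) hp)]

lemma prismReg_regProj (f g : V → W) (x : List V →₀ K) :
    prismReg K f g (regProj K V x) = prismReg K f g x := by
  suffices h : (prismReg K f g).comp (regProj K V) = prismReg K f g from LinearMap.congr_fun h x
  refine lhom_ext_single fun p => ?_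
  by_cases hp : Reg p
  · simp [hp]
  · rw [LinearMap.comp_apply, regProj_single, if_neg hp, map_zero, prismReg,
      LinearMap.comp_apply, prismFull_single, map_sum]
    exact (Finset.sum_eq_zero fun k _ => by
      rw [map_smul, regProj_single, if_neg (mt Reg.of_prismPath hp), smul_zero]).symm

lemma dReg_regProj_single {p : List V} (hp : 2 ≤ p.length) :
    dReg K V (regProj K V (Finsupp.single p 1)) =
      regProj K V (dFull K V (Finsupp.single p 1)) := by
  by_cases hreg : Reg p
  · rw [regProj_single, if_pos hreg, dReg_single_of_two_le hp]
  · rw [regProj_single, if_neg hreg, map_zero, regProj_dFull_single_of_not_reg hreg]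

lemma find_dReg (f : V → W) (x : List V →₀ K) :
    find K f (dReg K V x) = dReg K W (find K f x) := by
  suffices h : (find K f).comp (dReg K V) = (dReg K W).comp (find K f) from
    LinearMap.congr_fun h x
  refine lhom_ext_single fun p => ?_
  simp only [LinearMap.comp_apply]
  rcases lt_or_ge p.length 2 with hp | hp
  · rw [dReg_single_of_length_lt_two hp, map_zero, find_single]
    split_ifs
    · rw [dReg_single_of_length_lt_two (by simpa using hp)]
    · rw [map_zero]
  · rw [dReg_single_of_two_le hp, find_regProj, find_eq_regProj_comp_pathMap,
      LinearMap.comp_apply, LinearMap.comp_apply, pathMap_single, ← dFull_pathMap,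
      pathMap_single, dReg_regProj_single (by simpa using hp)]

lemma dReg_prismReg_single (f g : V → W) (p : List V) :
    dReg K W (prismReg K f g (Finsupp.single p 1)) =
      regProj K W (dFull K W (prismFull K f g (Finsupp.single p 1))) := by
  simp only [prismReg, LinearMap.comp_apply, prismFull_single, map_sum, map_smul]
  refine Finset.sum_congr rfl fun k _ => ?_
  rw [dReg_regProj_single (by rw [length_prismPath f g k.isLt]; have := k.isLt; omega)]

lemma prismReg_dReg_single (f g : V → W) (p : List V) :
    prismReg K f g (dReg K V (Finsupp.single p 1)) =
      regProj K W (prismFull K f g (dFull K V (Finsupp.single p 1))) := by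
  match p with
  | [] => simp [dReg_single]
  | [a] => simp [dReg_single]
  | a :: b :: t => rw [dReg_single_of_two_le (by simp), prismReg_regProj]; rfl

lemma prismReg_chainHomotopy (f g : V → W) :
    (dReg K W).comp (prismReg K f g) + (prismReg K f g).comp (dReg K V) = find K g - find K f := by
  refine lhom_ext_single fun p => ?_
  have h := LinearMap.congr_fun (prismFull_chainHomotopy (K := K) f g) (Finsupp.single p 1)
  simp only [LinearMap.add_apply, LinearMap.comp_apply, LinearMap.sub_apply] at h ⊢
  rw [dReg_prismReg_single, prismReg_dReg_single, ← map_add, h, map_sub,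
    find_eq_regProj_comp_pathMap, find_eq_regProj_comp_pathMap]
  rfl

lemma find_find {U : Type} (f : V → W) (g : W → U) (x : List V →₀ K) :
    find K g (find K f x) = find K (g ∘ f) x := by
  rw [find_eq_regProj_comp_pathMap f, LinearMap.comp_apply, find_regProj,
    find_eq_regProj_comp_pathMap g, find_eq_regProj_comp_pathMap (g ∘ f)]
  simp only [LinearMap.comp_apply, pathMap_pathMap]

end Regularized

section Paths

variable {V W U : Type} {G : WDigraph V} {H : WDigraph W}

lemma IsDGMap.comp {I : WDigraph U} {f : V → W} {g : W → U} (hf : IsDGMap G H f)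
    (hg : IsDGMap H I g) : IsDGMap G I (g ∘ f) := fun i j hij =>
  (hf i j hij).elim (fun h => Or.inl (congrArg g h)) (hg _ _)

lemma isDGMap_id_sublevel (G : WDigraph V) {δ δ' : ℝ} (h : δ ≤ δ') :
    IsDGMap (sublevel G δ) (sublevel G δ') id :=
  fun _ _ hij => Or.inr ⟨hij.1, hij.2.trans h⟩

lemma pathsOfW_sublevel_mono (G : WDigraph V) {δ δ' : ℝ} (h : δ ≤ δ') :
    pathsOfW (sublevel G δ) ⊆ pathsOfW (sublevel G δ') :=
  fun _ hl => ⟨hl.1, List.IsChain.imp (fun _ _ hxy => ⟨hxy.1, hxy.2.trans h⟩) hl.2⟩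

lemma IsDGMap.isChain_map {f : V → W} (hf : IsDGMap G H f) {l : List V}
    (hl : l.IsChain G.edge) (hreg : Reg (l.map f)) : (l.map f).IsChain H.edge := by
  rw [List.isChain_iff_getElem] at hl ⊢
  intro i hi
  simp only [List.getElem_map]
  exact (hf _ _ (hl i (by simpa using hi))).resolve_left
    (by simpa using reg_iff_getElem.mp hreg i hi)

lemma IsDGMap.map_mem_pathsOfW {f : V → W} (hf : IsDGMap G H f) {l : List V}
    (hl : l ∈ pathsOfW G) (hreg : Reg (l.map f)) : l.map f ∈ pathsOfW H :=
  ⟨by simpa using hl.1, hf.isChain_map hl.2 hreg⟩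

/-- The two halves of a prism path are images of allowed paths, and its middle step
`u(l[k]) → v(l[k])` is an edge as soon as the prism path is regular. -/
lemma prismPath_mem_pathsOfW {u v : V → W} (hu : IsDGMap G H u) (hv : IsDGMap G H v)
    (huv : ∀ x, u x = v x ∨ H.edge (u x) (v x)) {l : List V} (hl : l ∈ pathsOfW G) {k : ℕ}
    (hk : k < l.length) (hreg : Reg (prismPath u v l k)) : prismPath u v l k ∈ pathsOfW H := by
  refine ⟨List.ne_nil_of_length_pos (by rw [length_prismPath u v hk]; omega), ?_⟩
  obtain ⟨hreg₁, hreg₂, hmid⟩ := List.isChain_append.mp hreg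
  refine List.isChain_append.mpr ⟨hu.isChain_map (hl.2.take _) hreg₁,
    hv.isChain_map (hl.2.drop _) hreg₂, fun x hx y hy => ?_⟩
  have hmid' := hmid x hx y hy
  simp [List.getLast?_take, hk] at hx hy
  subst hx hy
  exact (huv _).resolve_left hmid'

end Paths

section Allowed

variable {K : Type} [Field K] {V W : Type}

lemma Asub_mono {P Q : Set (List V)} (h : P ⊆ Q) (n : ℕ) : Asub K P n ≤ Asub K Q n :=
  Finsupp.supported_mono fun _ hl => ⟨h hl.1, hl.2⟩

lemma OmegaSub_mono {P Q : Set (List V)} (h : P ⊆ Q) (n : ℕ) :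
    OmegaSub K P n ≤ OmegaSub K Q n :=
  inf_le_inf (Asub_mono h n) (Submodule.comap_mono (Asub_mono h (n - 1)))

lemma Zsub_mono {P Q : Set (List V)} (h : P ⊆ Q) (n : ℕ) : Zsub K P n ≤ Zsub K Q n :=
  inf_le_inf_right _ (OmegaSub_mono h n)

lemma Bsub_mono {P Q : Set (List V)} (h : P ⊆ Q) (n : ℕ) : Bsub K P n ≤ Bsub K Q n :=
  Submodule.map_mono (OmegaSub_mono h (n + 1))

lemma map_Asub_le {M : Type} [AddCommGroup M] [Module K M] (T : (List V →₀ K) →ₗ[K] M)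
    {P : Set (List V)} {n : ℕ} {S : Submodule K M}
    (h : ∀ l ∈ P, l.length = n + 1 → Reg l → T (Finsupp.single l 1) ∈ S) :
    (Asub K P n).map T ≤ S := by
  rw [Asub, Finsupp.supported_eq_span_single, Submodule.map_span_le]
  rintro _ ⟨l, ⟨hlP, hlen, hreg⟩, rfl⟩
  exact h l hlP hlen hreg

lemma find_id_of_mem_Asub {P : Set (List V)} {n : ℕ} {z : List V →₀ K} (hz : z ∈ Asub K P n) :
    find K id z = z := by
  rw [Asub, Finsupp.supported_eq_span_single] at hz
  refine LinearMap.eqOn_span (f := find K id) (g := LinearMap.id) ?_ hz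
  rintro _ ⟨l, ⟨-, -, hreg⟩, rfl⟩
  simp [find_single, hreg]

variable {G : WDigraph V} {H : WDigraph W}

lemma IsDGMap.find_mem_Asub {f : V → W} (hf : IsDGMap G H f) {n : ℕ} {z : List V →₀ K}
    (hz : z ∈ Asub K (pathsOfW G) n) : find K f z ∈ Asub K (pathsOfW H) n := by
  refine map_Asub_le (find K f) (fun l hl hlen _ => ?_) (Submodule.mem_map_of_mem hz)
  rw [find_single]
  split_ifs with hreg
  · exact Finsupp.single_mem_supported K 1 ⟨hf.map_mem_pathsOfW hl hreg, by simpa, hreg⟩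
  · exact zero_mem _

lemma IsDGMap.find_mem_OmegaSub {f : V → W} (hf : IsDGMap G H f) {n : ℕ} {z : List V →₀ K}
    (hz : z ∈ OmegaSub K (pathsOfW G) n) : find K f z ∈ OmegaSub K (pathsOfW H) n :=
  Submodule.mem_inf.mpr ⟨hf.find_mem_Asub hz.1, Submodule.mem_comap.mpr <| by
    rw [← find_dReg]; exact hf.find_mem_Asub hz.2⟩

lemma IsDGMap.find_mem_Zsub {f : V → W} (hf : IsDGMap G H f) {n : ℕ} {z : List V →₀ K}
    (hz : z ∈ Zsub K (pathsOfW G) n) : find K f z ∈ Zsub K (pathsOfW H) n :=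
  Submodule.mem_inf.mpr ⟨hf.find_mem_OmegaSub hz.1, LinearMap.mem_ker.mpr <| by
    rw [← find_dReg, LinearMap.mem_ker.mp hz.2, map_zero]⟩

lemma IsDGMap.find_mem_Bsub {f : V → W} (hf : IsDGMap G H f) {n : ℕ} {z : List V →₀ K}
    (hz : z ∈ Bsub K (pathsOfW G) n) : find K f z ∈ Bsub K (pathsOfW H) n := by
  obtain ⟨y, hy, rfl⟩ := hz
  exact ⟨find K f y, hf.find_mem_OmegaSub hy, (find_dReg f y).symm⟩

lemma prismReg_mem_Asub {u v : V → W} (hu : IsDGMap G H u) (hv : IsDGMap G H v)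
    (huv : ∀ x, u x = v x ∨ H.edge (u x) (v x)) {n : ℕ} {z : List V →₀ K}
    (hz : z ∈ Asub K (pathsOfW G) n) : prismReg K u v z ∈ Asub K (pathsOfW H) (n + 1) := by
  refine map_Asub_le (prismReg K u v) (fun l hl hlen _ => ?_) (Submodule.mem_map_of_mem hz)
  rw [prismReg, LinearMap.comp_apply, prismFull_single, map_sum]
  refine Submodule.sum_mem _ fun k _ => ?_
  rw [map_smul, regProj_single]
  split_ifs with hreg
  · exact Submodule.smul_mem _ _ (Finsupp.single_mem_supported K 1
      ⟨prismPath_mem_pathsOfW hu hv huv hl k.isLt hreg, by rw [length_prismPath u v k.isLt, hlen],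
        hreg⟩)
  · exact Submodule.smul_mem _ _ (zero_mem _)

end Allowed

section Homotopy

variable {K : Type} [Field K] {V W : Type} {G : WDigraph V} {H : WDigraph W}

lemma find_sub_find_mem_Bsub {u v : V → W} (hu : IsDGMap G H u) (hv : IsDGMap G H v)
    (huv : ∀ x, u x = v x ∨ H.edge (u x) (v x)) {n : ℕ} {z : List V →₀ K}
    (hz : z ∈ Zsub K (pathsOfW G) n) : find K v z - find K u z ∈ Bsub K (pathsOfW H) n := by
  have hzA : z ∈ Asub K (pathsOfW G) n := hz.1.1
  have hd : dReg K W (prismReg K u v z) = find K v z - find K u z := by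
    have h := LinearMap.congr_fun (prismReg_chainHomotopy (K := K) u v) z
    simp only [LinearMap.add_apply, LinearMap.comp_apply, LinearMap.sub_apply] at h
    rwa [LinearMap.mem_ker.mp hz.2, map_zero, add_zero] at h
  refine ⟨prismReg K u v z, Submodule.mem_inf.mpr ⟨prismReg_mem_Asub hu hv huv hzA, ?_⟩, hd⟩
  rw [Submodule.mem_comap, hd]
  exact sub_mem (hv.find_mem_Asub hzA) (hu.find_mem_Asub hzA)

lemma StepHomotopic.find_sub_find_mem_Bsub {u v : V → W} (huv : StepHomotopic H u v)
    (hu : IsDGMap G H u) (hv : IsDGMap G H v) {n : ℕ} {z : List V →₀ K}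
    (hz : z ∈ Zsub K (pathsOfW G) n) : find K v z - find K u z ∈ Bsub K (pathsOfW H) n := by
  rcases huv with huv | hvu
  · exact PH.find_sub_find_mem_Bsub hu hv huv hz
  · simpa using neg_mem (PH.find_sub_find_mem_Bsub hv hu hvu hz)

lemma find_sub_find_mem_Bsub_of_chain {F : ℕ → V → W} {m : ℕ}
    (hF : ∀ k ≤ m, IsDGMap G H (F k))
    (hstep : ∀ k, 1 ≤ k → k ≤ m → StepHomotopic H (F (k - 1)) (F k)) {n : ℕ}
    {z : List V →₀ K} (hz : z ∈ Zsub K (pathsOfW G) n) :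
    find K (F m) z - find K (F 0) z ∈ Bsub K (pathsOfW H) n := by
  induction m with
  | zero => simp
  | succ m ih =>
    have hlast := (hstep (m + 1) le_add_self le_rfl).find_sub_find_mem_Bsub
      (hF m (by omega)) (hF (m + 1) le_rfl) hz
    have hrest := ih (fun k hk => hF k (by omega)) (fun k h₁ h₂ => hstep k h₁ (by omega))
    simpa using add_mem hlast hrest

end Homotopy

section Distortion

lemma le_sSup_insert_zero {s : Set ℝ} (hs : s.Finite) {x : ℝ} (hx : x ∈ s) :
    x ≤ sSup (insert 0 s) :=
  le_csSup (hs.insert 0).bddAbove (Set.mem_insert_of_mem _ hx)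

lemma le_sSup_insert_zero_of_mem_Icc (F : ℕ → ℝ) {M k : ℕ} (h₁ : 1 ≤ k) (h₂ : k ≤ M) :
    F k ≤ sSup (insert 0 {d | ∃ k, 1 ≤ k ∧ k ≤ M ∧ d = F k}) := by
  refine le_sSup_insert_zero (((Set.finite_Iic M).image F).subset ?_) ⟨k, h₁, h₂, rfl⟩
  rintro _ ⟨j, -, hj, rfl⟩
  exact ⟨j, hj, rfl⟩

variable {V W : Type} [Fintype V]

lemma dis_set_finite (G : WDigraph V) (H : WDigraph W) (φ : V → W) :
    {d : ℝ | ∃ x x' : V, G.edge x x' ∧ H.edge (φ x) (φ x') ∧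
      d = |H.w (φ x) (φ x') - G.w x x'|}.Finite := by
  refine (Set.finite_range fun z : V × V => |H.w (φ z.1) (φ z.2) - G.w z.1 z.2|).subset ?_
  rintro _ ⟨x, x', -, -, rfl⟩
  exact ⟨(x, x'), rfl⟩

lemma dis_nonneg (G : WDigraph V) (H : WDigraph W) (φ : V → W) : 0 ≤ dis G H φ :=
  le_csSup ((dis_set_finite G H φ).insert 0).bddAbove (Set.mem_insert _ _)

lemma abs_sub_le_dis (G : WDigraph V) (H : WDigraph W) (φ : V → W) {x x' : V}
    (h₁ : G.edge x x') (h₂ : H.edge (φ x) (φ x')) :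
    |H.w (φ x) (φ x') - G.w x x'| ≤ dis G H φ :=
  le_sSup_insert_zero (dis_set_finite G H φ) ⟨x, x', h₁, h₂, rfl⟩

lemma cod_set_finite (H : WDigraph W) (φ ψ : V → W) :
    ({d : ℝ | ∃ x : V, H.edge (φ x) (ψ x) ∧ d = H.w (φ x) (ψ x)} ∪
      {d : ℝ | ∃ x : V, H.edge (ψ x) (φ x) ∧ d = H.w (ψ x) (φ x)}).Finite := by
  refine ((Set.finite_range fun x => H.w (φ x) (ψ x)).subset ?_).union
    ((Set.finite_range fun x => H.w (ψ x) (φ x)).subset ?_) <;>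
  · rintro _ ⟨x, -, rfl⟩
    exact ⟨x, rfl⟩

lemma IsDGMap.sublevel_of_dis_le {G : WDigraph V} {H : WDigraph W} {φ : V → W}
    (hφ : IsDGMap G H φ) {δ δ' : ℝ} (h : δ + dis G H φ ≤ δ') :
    IsDGMap (sublevel G δ) (sublevel H δ') φ := fun x y hxy =>
  (hφ x y hxy.1).imp_right fun he =>
    ⟨he, by linarith [(abs_le.mp (abs_sub_le_dis G H φ hxy.1 he)).2, hxy.2]⟩

lemma StepHomotopic.sublevel_of_cod_le {H : WDigraph W} {φ ψ : V → W}
    (h : StepHomotopic H φ ψ) {δ : ℝ} (hδ : cod H φ ψ ≤ δ) :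
    StepHomotopic (sublevel H δ) φ ψ := by
  have hφψ : ∀ x, H.edge (φ x) (ψ x) → H.w (φ x) (ψ x) ≤ δ := fun x he =>
    (le_sSup_insert_zero (cod_set_finite H φ ψ) (Or.inl ⟨x, he, rfl⟩)).trans hδ
  have hψφ : ∀ x, H.edge (ψ x) (φ x) → H.w (ψ x) (φ x) ≤ δ := fun x he =>
    (le_sSup_insert_zero (cod_set_finite H φ ψ) (Or.inr ⟨x, he, rfl⟩)).trans hδ
  exact h.imp (fun h x => (h x).imp_right fun he => ⟨he, hφψ x he⟩)
    (fun h x => (h x).imp_right fun he => ⟨he, hψφ x he⟩)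

end Distortion

lemma find_find_sub_mem_Bsub {K : Type} [Field K] {V W : Type} [Fintype V] [Fintype W]
    (G : WDigraph V) (H : WDigraph W) {φ : V → W} {ψ : W → V}
    (hφ : IsDGMap G H φ) (hψ : IsDGMap H G ψ) {m : ℕ} {F : ℕ → V → V}
    (hF0 : F 0 = ψ ∘ φ) (hFm : F m = id) (hFdg : ∀ k ≤ m, IsDGMap G G (F k))
    (hFstep : ∀ k, 1 ≤ k → k ≤ m → StepHomotopic G (F (k - 1)) (F k)) {η : ℝ}
    (hφη : dis G H φ ≤ η) (hψη : dis H G ψ ≤ η)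
    (hdis : ∀ k, 1 ≤ k → k ≤ m - 1 → dis G G (F k) ≤ 2 * η)
    (hcod : ∀ k, 1 ≤ k → k ≤ m → cod G (F (k - 1)) (F k) ≤ 2 * η) {δ : ℝ} (hδ : 0 ≤ δ)
    {n : ℕ} {z : List V →₀ K} (hz : z ∈ Zsub K (pathsOfW (sublevel G δ)) n) :
    find K ψ (find K φ z) - z ∈ Bsub K (pathsOfW (sublevel G (δ + 2 * η))) n := by
  have hη : 0 ≤ η := (dis_nonneg G H φ).trans hφη
  have hdg : ∀ k ≤ m, IsDGMap (sublevel G δ) (sublevel G (δ + 2 * η)) (F k) := by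
    intro k hk
    rcases Nat.eq_zero_or_pos k with rfl | hk₀
    · rw [hF0]
      exact (hφ.sublevel_of_dis_le le_rfl).comp (hψ.sublevel_of_dis_le (by linarith))
    rcases hk.eq_or_lt with rfl | hkm
    · rw [hFm]
      exact isDGMap_id_sublevel G (by linarith)
    · exact (hFdg k hk).sublevel_of_dis_le (by linarith [hdis k hk₀ (by omega)])
  have hstep : ∀ k, 1 ≤ k → k ≤ m → StepHomotopic (sublevel G (δ + 2 * η)) (F (k - 1)) (F k) :=
    fun k h₁ h₂ => (hFstep k h₁ h₂).sublevel_of_cod_le (by linarith [hcod k h₁ h₂])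
  have h := neg_mem (find_sub_find_mem_Bsub_of_chain hdg hstep hz)
  rwa [neg_sub, hFm, find_id_of_mem_Asub hz.1.1, hF0, ← find_find] at h

end PH

theorem statement15 (K : Type) [Field K] (V W : Type) [Fintype V] [Fintype W]
    (G : PH.WDigraph V) (H : PH.WDigraph W) (φ : V → W) (ψ : W → V)
    (hφ : PH.IsDGMap G H φ) (hψ : PH.IsDGMap H G ψ)
    (m : ℕ) (f : ℕ → V → V) (g : ℕ → W → W)
    (hf0 : f 0 = ψ ∘ φ) (hfm : f m = id)
    (hfdg : ∀ k : ℕ, k ≤ m → PH.IsDGMap G G (f k))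
    (hfstep : ∀ k : ℕ, 1 ≤ k → k ≤ m → PH.StepHomotopic G (f (k - 1)) (f k))
    (hg0 : g 0 = φ ∘ ψ) (hgm : g m = id)
    (hgdg : ∀ k : ℕ, k ≤ m → PH.IsDGMap H H (g k))
    (hgstep : ∀ k : ℕ, 1 ≤ k → k ≤ m → PH.StepHomotopic H (g (k - 1)) (g k))
    (η : ℝ)
    (hη : η = max (PH.dis G H φ) (max (PH.dis H G ψ)
      (max ((1 / 2) * sSup (insert 0
          {d : ℝ | ∃ k : ℕ, 1 ≤ k ∧ k ≤ m - 1 ∧ d = PH.dis G G (f k)}))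
      (max ((1 / 2) * sSup (insert 0
          {d : ℝ | ∃ k : ℕ, 1 ≤ k ∧ k ≤ m - 1 ∧ d = PH.dis H H (g k)}))
      (max ((1 / 2) * sSup (insert 0
          {d : ℝ | ∃ k : ℕ, 1 ≤ k ∧ k ≤ m ∧ d = PH.cod G (f (k - 1)) (f k)}))
           ((1 / 2) * sSup (insert 0
          {d : ℝ | ∃ k : ℕ, 1 ≤ k ∧ k ≤ m ∧ d = PH.cod H (g (k - 1)) (g k)}))))))) :
    ∀ p : ℕ,
      -- φ and ψ induce the interleaving maps: they carry cycles to cycles and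
      -- boundaries to boundaries, one scale η later
      (∀ δ : ℝ, 0 ≤ δ →
        (∀ z : List V →₀ K, z ∈ PH.Zsub K (PH.pathsOfW (PH.sublevel G δ)) p →
            PH.find K φ z ∈ PH.Zsub K (PH.pathsOfW (PH.sublevel H (δ + η))) p) ∧
        (∀ z : List V →₀ K, z ∈ PH.Bsub K (PH.pathsOfW (PH.sublevel G δ)) p →
            PH.find K φ z ∈ PH.Bsub K (PH.pathsOfW (PH.sublevel H (δ + η))) p) ∧
        (∀ z : List W →₀ K, z ∈ PH.Zsub K (PH.pathsOfW (PH.sublevel H δ)) p →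
            PH.find K ψ z ∈ PH.Zsub K (PH.pathsOfW (PH.sublevel G (δ + η))) p) ∧
        (∀ z : List W →₀ K, z ∈ PH.Bsub K (PH.pathsOfW (PH.sublevel H δ)) p →
            PH.find K ψ z ∈ PH.Bsub K (PH.pathsOfW (PH.sublevel G (δ + η))) p)) ∧
      -- the structure maps of the two persistence modules are induced by the inclusions
      (∀ δ δ' : ℝ, 0 ≤ δ → δ ≤ δ' →
        PH.Zsub K (PH.pathsOfW (PH.sublevel G δ)) p ≤
          PH.Zsub K (PH.pathsOfW (PH.sublevel G δ')) p ∧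
        PH.Bsub K (PH.pathsOfW (PH.sublevel G δ)) p ≤
          PH.Bsub K (PH.pathsOfW (PH.sublevel G δ')) p ∧
        PH.Zsub K (PH.pathsOfW (PH.sublevel H δ)) p ≤
          PH.Zsub K (PH.pathsOfW (PH.sublevel H δ')) p ∧
        PH.Bsub K (PH.pathsOfW (PH.sublevel H δ)) p ≤
          PH.Bsub K (PH.pathsOfW (PH.sublevel H δ')) p) ∧
      -- and the composites equal the structure maps δ ≤ δ+2η on homology
      (∀ δ : ℝ, 0 ≤ δ →
        (∀ z : List V →₀ K, z ∈ PH.Zsub K (PH.pathsOfW (PH.sublevel G δ)) p →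
            PH.find K ψ (PH.find K φ z) - z ∈
              PH.Bsub K (PH.pathsOfW (PH.sublevel G (δ + 2 * η))) p) ∧
        (∀ z : List W →₀ K, z ∈ PH.Zsub K (PH.pathsOfW (PH.sublevel H δ)) p →
            PH.find K φ (PH.find K ψ z) - z ∈
              PH.Bsub K (PH.pathsOfW (PH.sublevel H (δ + 2 * η))) p)) := by
  have hbounds := hη.ge
  simp only [max_le_iff] at hbounds
  obtain ⟨hφη, hψη, hfdis, hgdis, hfcod, hgcod⟩ := hbounds
  intro p
  refine ⟨fun δ _ => ⟨?_, ?_, ?_, ?_⟩, fun δ δ' _ hle => ?_, fun δ hδ => ⟨?_, ?_⟩⟩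
  · exact fun z => (hφ.sublevel_of_dis_le (by linarith)).find_mem_Zsub
  · exact fun z => (hφ.sublevel_of_dis_le (by linarith)).find_mem_Bsub
  · exact fun z => (hψ.sublevel_of_dis_le (by linarith)).find_mem_Zsub
  · exact fun z => (hψ.sublevel_of_dis_le (by linarith)).find_mem_Bsub
  · have hG := PH.pathsOfW_sublevel_mono G hle
    have hH := PH.pathsOfW_sublevel_mono H hle
    exact ⟨PH.Zsub_mono hG p, PH.Bsub_mono hG p, PH.Zsub_mono hH p, PH.Bsub_mono hH p⟩
  · exact fun z => PH.find_find_sub_mem_Bsub G H hφ hψ hf0 hfm hfdg hfstep hφη hψη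
      (fun k h₁ h₂ => by linarith [PH.le_sSup_insert_zero_of_mem_Icc (PH.dis G G <| f ·) h₁ h₂])
      (fun k h₁ h₂ => by
        linarith [PH.le_sSup_insert_zero_of_mem_Icc (fun k => PH.cod G (f (k - 1)) (f k)) h₁ h₂])
      hδ
  · exact fun z => PH.find_find_sub_mem_Bsub H G hψ hφ hg0 hgm hgdg hgstep hψη hφη
      (fun k h₁ h₂ => by linarith [PH.le_sSup_insert_zero_of_mem_Icc (PH.dis H H <| g ·) h₁ h₂])
      (fun k h₁ h₂ => by
        linarith [PH.le_sSup_insert_zero_of_mem_Icc (fun k => PH.cod H (g (k - 1)) (g k)) h₁ h₂])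
      hδ
end
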